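/- Let m ≥ 1, N = 2^m, and let n ∈ {0, …, 2^m − 1} be an unknown threshold; a query at index i is flagged if and only if i > n. Consider the binary search that maintains a lower bound lo (initialized to 0) and, for t = 0, 1, …, m − 1, queries q_t = lo + 2^{m−1−t}, updating lo := q_t exactly when the query is not flagged. Then: (i) the search makes exactly m queries and terminates with lo = n; (ii) the number of flagged queries equals m minus the number of ones in the m-bit binary representation of n (i.e., the number of zero bits of n); and (iii) if n is uniformly distributed on {0, …, 2^m − 1}, the expected number of flagged queries is exactly m/2. -/

import Mathlib

/-- The lower bound `lo` maintained by the binary search for a threshold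
`n ∈ {0,…,2^m − 1}` after `t` steps: `lo` starts at `0` and, at step
`t = 0,1,…,m−1`, the search queries `q_t = lo + 2^(m−1−t)`; the query is flagged
iff `q_t > n`, and `lo` is updated to `q_t` exactly when the query is not flagged. -/
def bsLo (m n : ℕ) : ℕ → ℕ
  | 0 => 0
  | t + 1 =>
    let q := bsLo m n t + 2 ^ (m - 1 - t)
    if n < q then bsLo m n t else q   -- flagged iff `q > n`; update `lo` iff not flagged

/-- The list of the `m` queries made by the binary search. -/
def bsQueries (m n : ℕ) : List ℕ :=
  (List.range m).map fun t => bsLo m n t + 2 ^ (m - 1 - t)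

/-- The number of flagged queries made by the binary search. -/
def bsFlagged (m n : ℕ) : ℕ :=
  ((Finset.range m).filter fun t => n < bsLo m n t + 2 ^ (m - 1 - t)).card

/-!
After `t` steps the search has `lo = ⌊n / 2^(m-t)⌋ · 2^(m-t)`, i.e. `n` with its low `m - t` bits
cleared, and its next query `lo + 2^(m-1-t)` exceeds `n` exactly when bit `m - 1 - t` of `n` is
zero. So the flagged queries count the zero bits of `n`. The complement `2^m - 1 - n` has
exactly the other bits zero, so pairing `n` with it gives two thresholds whose flagged counts
add up to `m`, and the average is `m / 2`.
-/

open Finset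

namespace Nat

theorem div_two_pow_mul_eq (n k : ℕ) :
    n / 2 ^ k * 2 ^ k = n / 2 ^ (k + 1) * 2 ^ (k + 1) + if n.testBit k then 2 ^ k else 0 := by
  have hdiv : n / 2 ^ (k + 1) = n / 2 ^ k / 2 := by rw [Nat.div_div_eq_div_mul, pow_succ]
  conv_lhs => rw [← div_add_mod (n / 2 ^ k) 2]
  rw [hdiv, testBit_eq_decide_div_mod_eq]
  rcases mod_two_eq_zero_or_one (n / 2 ^ k) with h | h <;> simp [h] <;> ring

theorem lt_div_two_pow_succ_mul_add_iff (n k : ℕ) :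
    n < n / 2 ^ (k + 1) * 2 ^ (k + 1) + 2 ^ k ↔ n.testBit k = false := by
  have hfloor := div_two_pow_mul_eq n k
  cases hbit : n.testBit k
  · simp only [hbit, Bool.false_eq_true, if_false, add_zero, iff_true] at hfloor ⊢
    exact hfloor ▸ lt_div_mul_add (Nat.two_pow_pos k)
  · simp only [hbit, if_true, Bool.true_eq_false, iff_false, not_lt] at hfloor ⊢
    exact hfloor ▸ div_mul_le_self n (2 ^ k)

theorem testBit_two_pow_sub_one_sub {m n : ℕ} (hn : n < 2 ^ m) {t : ℕ} (ht : t < m) :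
    (2 ^ m - 1 - n).testBit t = !n.testBit t := by
  rw [Nat.sub_sub, Nat.add_comm, testBit_two_pow_sub_succ hn, decide_eq_true ht, Bool.true_and]

theorem card_testBit_false_add_card_testBit_true (m n : ℕ) :
    #{t ∈ range m | n.testBit t = false} + #{t ∈ range m | n.testBit t = true} = m := by
  simpa only [Bool.not_eq_false, card_range] using
    card_filter_add_card_filter_not (s := range m) (fun t => n.testBit t = false)

end Nat

theorem Finset.card_filter_range_reflect (p : ℕ → Prop) [DecidablePred p] (m : ℕ) :
    #{t ∈ range m | p (m - 1 - t)} = #{t ∈ range m | p t} := by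
  simp only [card_filter]
  exact sum_range_reflect (fun t => if p t then 1 else 0) m

section BinarySearch

variable {m n : ℕ}

theorem bsLo_eq_div_mul (hn : n < 2 ^ m) {t : ℕ} (ht : t ≤ m) :
    bsLo m n t = n / 2 ^ (m - t) * 2 ^ (m - t) := by
  induction t with
  | zero => simp [bsLo, Nat.div_eq_of_lt hn]
  | succ t ih =>
    rw [bsLo, ih (by omega), show m - t = m - 1 - t + 1 by omega,
      show m - (t + 1) = m - 1 - t by omega, Nat.div_two_pow_mul_eq n (m - 1 - t)]
    simp only [Nat.lt_div_two_pow_succ_mul_add_iff]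
    cases n.testBit (m - 1 - t) <;> simp

theorem bsLo_self (hn : n < 2 ^ m) : bsLo m n m = n := by
  simp [bsLo_eq_div_mul hn le_rfl]

theorem bsQueries_length : (bsQueries m n).length = m := by
  simp [bsQueries]

theorem bsQuery_flagged_iff (hn : n < 2 ^ m) {t : ℕ} (ht : t < m) :
    n < bsLo m n t + 2 ^ (m - 1 - t) ↔ n.testBit (m - 1 - t) = false := by
  rw [bsLo_eq_div_mul hn ht.le, show m - t = m - 1 - t + 1 by omega,
    Nat.lt_div_two_pow_succ_mul_add_iff]

theorem bsFlagged_eq_card_testBit_false (hn : n < 2 ^ m) :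
    bsFlagged m n = #{t ∈ range m | n.testBit t = false} := by
  rw [bsFlagged, ← card_filter_range_reflect (fun t => n.testBit t = false)]
  congr 1
  exact filter_congr fun t ht => bsQuery_flagged_iff hn (mem_range.mp ht)

theorem bsFlagged_add_bsFlagged_two_pow_sub_one_sub (hn : n < 2 ^ m) :
    bsFlagged m n + bsFlagged m (2 ^ m - 1 - n) = m := by
  have hcompl : 2 ^ m - 1 - n < 2 ^ m := by omega
  have hzeros_compl : {t ∈ range m | (2 ^ m - 1 - n).testBit t = false} =
      {t ∈ range m | n.testBit t = true} :=
    filter_congr fun t ht => by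
      rw [Nat.testBit_two_pow_sub_one_sub hn (mem_range.mp ht), Bool.not_eq_false']
  rw [bsFlagged_eq_card_testBit_false hn, bsFlagged_eq_card_testBit_false hcompl, hzeros_compl]
  exact Nat.card_testBit_false_add_card_testBit_true m n

theorem two_mul_sum_bsFlagged (m : ℕ) :
    2 * ∑ n ∈ range (2 ^ m), bsFlagged m n = m * 2 ^ m := by
  calc 2 * ∑ n ∈ range (2 ^ m), bsFlagged m n
      = ∑ n ∈ range (2 ^ m), (bsFlagged m n + bsFlagged m (2 ^ m - 1 - n)) := by
        rw [sum_add_distrib, sum_range_reflect (bsFlagged m), two_mul]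
    _ = ∑ _n ∈ range (2 ^ m), m :=
        sum_congr rfl fun n hn => bsFlagged_add_bsFlagged_two_pow_sub_one_sub (mem_range.mp hn)
    _ = m * 2 ^ m := by rw [sum_const, card_range, smul_eq_mul, mul_comm]

end BinarySearch

theorem binarySearch_flagged_general (m : ℕ) :
    (∀ n < 2 ^ m, (bsQueries m n).length = m ∧ bsLo m n m = n) ∧
    (∀ n < 2 ^ m,
      bsFlagged m n = ((Finset.range m).filter fun t => n.testBit t = false).card ∧
      bsFlagged m n = m - ((Finset.range m).filter fun t => n.testBit t = true).card) ∧
    (∑ n ∈ Finset.range (2 ^ m), (bsFlagged m n : ℝ)) / (2 ^ m : ℝ) = (m : ℝ) / 2 := by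
  refine ⟨fun n hn => ⟨bsQueries_length, bsLo_self hn⟩,
    fun n hn => ⟨bsFlagged_eq_card_testBit_false hn, ?_⟩, ?_⟩
  · have hbits := Nat.card_testBit_false_add_card_testBit_true m n
    rw [bsFlagged_eq_card_testBit_false hn]
    omega
  · have hsum : 2 * ∑ n ∈ range (2 ^ m), (bsFlagged m n : ℝ) = m * 2 ^ m := by
      exact_mod_cast two_mul_sum_bsFlagged m
    field_simp
    linarith

/-- For `N = 2^m` (`m ≥ 1`) and an unknown threshold
`n ∈ {0,…,2^m − 1}`: (i) the binary search makes exactly `m` queries and terminates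
with `lo = n`; (ii) its number of flagged queries equals the number of zero bits in
the `m`-bit binary representation of `n`, i.e. `m` minus the number of one bits; and
(iii) if `n` is uniform on `{0,…,2^m − 1}`, the expected number of flagged queries
is exactly `m/2`. -/
theorem binarySearch_flagged (m : ℕ) (hm : 1 ≤ m) :
    (∀ n < 2 ^ m, (bsQueries m n).length = m ∧ bsLo m n m = n) ∧
    (∀ n < 2 ^ m,
      bsFlagged m n = ((Finset.range m).filter fun t => n.testBit t = false).card ∧
      bsFlagged m n = m - ((Finset.range m).filter fun t => n.testBit t = true).card) ∧
    (∑ n ∈ Finset.range (2 ^ m), (bsFlagged m n : ℝ)) / (2 ^ m : ℝ) = (m : ℝ) / 2 :=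
  binarySearch_flagged_general m
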